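/- Let C < 0 < D with C + D t₂ > 0, and t₁ = 1/t₂ with t₂ > 1. For z = x + iy on the circle x² + y² = (t₂ − ε)², one has |(t₁ − z)(C + D t₂)|² − |(t₁ − t₂)(C + D z)|² = 2(C + D t₁)(C t₁ + D t₂²)(t₂ − x) − 2 t₂ (C + D t₁)(C − D t₁ + 2 D t₂)ε + O(ε²), where the implied constant depends only on C, D, t₁, t₂. -/

import Mathlib

/-!
The `O(ε²)` term is exact: after expanding both moduli in real coordinates, the circle equation
`x² + y² = (t₂ - ε)²` turns the remainder into the polynomial identity
`remainder = ((C + D t₂)² - (t₁ - t₂)² D²) ε²`.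
-/

open Complex

lemma sq_norm_ofReal_sub_mul (a b C D x y : ℝ) :
    ‖((a : ℂ) - (x + y * I)) * ((C : ℂ) + D * b)‖ ^ 2 = ((a - x) ^ 2 + y ^ 2) * (C + D * b) ^ 2 := by
  rw [norm_mul, mul_pow, Complex.sq_norm, Complex.sq_norm]
  simp [normSq_apply]
  ring

lemma sq_norm_ofReal_mul_add (a b C D x y : ℝ) :
    ‖((a : ℂ) - b) * ((C : ℂ) + D * (x + y * I))‖ ^ 2
      = (a - b) ^ 2 * ((C + D * x) ^ 2 + (D * y) ^ 2) := by
  rw [norm_mul, mul_pow, Complex.sq_norm, Complex.sq_norm]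
  simp [normSq_apply]
  ring

lemma modulus_difference_remainder_eq {t₁ t₂ C D x y ε : ℝ}
    (hxy : x ^ 2 + y ^ 2 = (t₂ - ε) ^ 2) :
    ((t₁ - x) ^ 2 + y ^ 2) * (C + D * t₂) ^ 2 - (t₁ - t₂) ^ 2 * ((C + D * x) ^ 2 + (D * y) ^ 2)
      - (2 * (C + D * t₁) * (C * t₁ + D * t₂ ^ 2) * (t₂ - x)
          - 2 * t₂ * (C + D * t₁) * (C - D * t₁ + 2 * D * t₂) * ε)
      = ((C + D * t₂) ^ 2 - (t₁ - t₂) ^ 2 * D ^ 2) * ε ^ 2 := by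
  linear_combination ((C + D * t₂) ^ 2 - (t₁ - t₂) ^ 2 * D ^ 2) * hxy

theorem modulus_difference_expansion_general
    (t₂ C D : ℝ) (t₁ : ℝ) :
    ∃ K : ℝ, 0 < K ∧ ∀ ε : ℝ, 0 < ε → ∀ x y : ℝ,
      x ^ 2 + y ^ 2 = (t₂ - ε) ^ 2 →
      |‖((t₁ : ℂ) - (x + y * Complex.I)) * ((C : ℂ) + D * t₂)‖ ^ 2
          - ‖((t₁ : ℂ) - t₂) * ((C : ℂ) + D * (x + y * Complex.I))‖ ^ 2
          - (2 * (C + D * t₁) * (C * t₁ + D * t₂ ^ 2) * (t₂ - x)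
              - 2 * t₂ * (C + D * t₁) * (C - D * t₁ + 2 * D * t₂) * ε)|
        ≤ K * ε ^ 2 := by
  set c := (C + D * t₂) ^ 2 - (t₁ - t₂) ^ 2 * D ^ 2
  refine ⟨|c| + 1, by positivity, fun ε _ x y hxy => ?_⟩
  rw [sq_norm_ofReal_sub_mul, sq_norm_ofReal_mul_add, modulus_difference_remainder_eq hxy,
    abs_mul, abs_sq]
  gcongr
  linarith

theorem modulus_difference_expansion
    (t₂ C D : ℝ) (ht2 : 1 < t₂) (t₁ : ℝ) (ht1 : t₁ = 1 / t₂)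
    (hC : C < 0) (hD : 0 < D) (hCD : C + D * t₂ > 0) :
    ∃ K : ℝ, 0 < K ∧ ∀ ε : ℝ, 0 < ε → ∀ x y : ℝ,
      x ^ 2 + y ^ 2 = (t₂ - ε) ^ 2 →
      |‖((t₁ : ℂ) - (x + y * Complex.I)) * ((C : ℂ) + D * t₂)‖ ^ 2
          - ‖((t₁ : ℂ) - t₂) * ((C : ℂ) + D * (x + y * Complex.I))‖ ^ 2
          - (2 * (C + D * t₁) * (C * t₁ + D * t₂ ^ 2) * (t₂ - x)
              - 2 * t₂ * (C + D * t₁) * (C - D * t₁ + 2 * D * t₂) * ε)|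
        ≤ K * ε ^ 2 :=
  modulus_difference_expansion_general t₂ C D t₁
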